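/- arXiv:2007.01162 — 2 statements merged into one kernel-verified Lean document; each statement's English description precedes it below -/
import Mathlib

section
/- In the GLM setting, the optimal tilted objective is nondecreasing in the tilt: if t ≤ t' are real numbers, θ* minimizes θ ↦ R̃(t;θ) over ℝ^d and θ*' minimizes θ ↦ R̃(t';θ) over ℝ^d, then R̃(t;θ*) ≤ R̃(t';θ*'). -/
/-!
For fixed `θ`, write `K(t) = log((1/N) Σᵢ exp(t fᵢ(θ)))` for the cumulant generating function of
the empirical distribution of the losses. Then `R̃(t;θ) = (K(t) - K(0)) / t` for `t ≠ 0`, and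
`R̃(0;θ) = K'(0)`: the tilted loss is `dslope K 0`. Since `K` is convex (Hölder's inequality, here
obtained from the convexity of `exp`), its difference quotients at `0` are nondecreasing in `t`.
Hence `R̃(t;θ*) ≤ R̃(t;θ*') ≤ R̃(t';θ*')`.
-/

open Real Finset

/-- The `t`-tilted GLM loss, with losses `fᵢ(θ) = A(θ) − ⟨θ,Tᵢ⟩`: for `t ≠ 0`,
`R̃(t;θ) = (1/t)·log((1/N)·Σᵢ exp(t·fᵢ(θ)))`, extended by `R̃(0;θ) = (1/N)·Σᵢ fᵢ(θ)`. -/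
noncomputable def glmTiltedLoss {d N : ℕ} (T : Fin N → EuclideanSpace ℝ (Fin d))
    (A : EuclideanSpace ℝ (Fin d) → ℝ) (t : ℝ) (θ : EuclideanSpace ℝ (Fin d)) : ℝ :=
  if t = 0 then (1 / (N : ℝ)) * ∑ i, (A θ - (inner ℝ θ (T i) : ℝ))
  else (1 / t) * Real.log ((1 / (N : ℝ)) * ∑ i, Real.exp (t * (A θ - (inner ℝ θ (T i) : ℝ))))

theorem ConvexOn.monotoneOn_dslope {S : Set ℝ} {f : ℝ → ℝ} {a : ℝ} (hf : ConvexOn ℝ S f)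
    (ha : a ∈ S) (hfa : DifferentiableAt ℝ f a) : MonotoneOn (dslope f a) S := by
  intro x hx y hy hxy
  obtain rfl | hlt := hxy.eq_or_lt
  · exact le_rfl
  obtain rfl | hxa := eq_or_ne x a
  · rw [dslope_same, dslope_of_ne f hlt.ne']
    exact hf.deriv_le_slope hx hy hlt hfa
  obtain rfl | hya := eq_or_ne y a
  · rw [dslope_same, dslope_of_ne f hxa, slope_comm]
    exact hf.slope_le_deriv hx hy hlt hfa
  rw [dslope_of_ne f hxa, dslope_of_ne f hya]
  exact hf.slope_mono ha ⟨hx, hxa⟩ ⟨hy, hya⟩ hxy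

section LogMeanExp

variable {ι : Type*} [Fintype ι] (w x : ι → ℝ)

/-- The cumulant generating function of `x` under the probability weights `w`. -/
noncomputable def logMeanExp (t : ℝ) : ℝ :=
  Real.log (∑ i, w i * Real.exp (t * x i))

variable {w}

theorem sum_mul_exp_pos (hw : ∀ i, 0 ≤ w i) (hw1 : ∑ i, w i = 1) (t : ℝ) :
    0 < ∑ i, w i * Real.exp (t * x i) := by
  obtain ⟨i, -, hi⟩ := exists_lt_of_sum_lt (s := univ) (f := 0) (g := w) (by simp [hw1])
  exact sum_pos' (fun j _ => mul_nonneg (hw j) (exp_pos _).le)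
    ⟨i, mem_univ i, mul_pos hi (exp_pos _)⟩

theorem exp_logMeanExp (hw : ∀ i, 0 ≤ w i) (hw1 : ∑ i, w i = 1) (t : ℝ) :
    Real.exp (logMeanExp w x t) = ∑ i, w i * Real.exp (t * x i) :=
  exp_log (sum_mul_exp_pos x hw hw1 t)

theorem logMeanExp_zero (hw1 : ∑ i, w i = 1) : logMeanExp w x 0 = 0 := by
  simp [logMeanExp, hw1]

theorem hasDerivAt_logMeanExp_zero (hw1 : ∑ i, w i = 1) :
    HasDerivAt (logMeanExp w x) (∑ i, w i * x i) 0 := by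
  have hsum : HasDerivAt (fun t => ∑ i, w i * Real.exp (t * x i))
      (∑ i, w i * (Real.exp (0 * x i) * x i)) 0 :=
    HasDerivAt.fun_sum fun i _ => ((hasDerivAt_mul_const (x i)).exp).const_mul (w i)
  unfold logMeanExp
  simpa [hw1] using hsum.log (by simp [hw1])

theorem convexOn_logMeanExp (hw : ∀ i, 0 ≤ w i) (hw1 : ∑ i, w i = 1) :
    ConvexOn ℝ Set.univ (logMeanExp w x) := by
  refine ⟨convex_univ, fun s _ t _ a b ha hb hab => ?_⟩
  set K := logMeanExp w x
  -- Hölder's inequality, via convexity of `exp` after normalizing each exponential to mean `1`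
  have hexp : ∀ i, Real.exp ((a * s + b * t) * x i - (a * K s + b * K t)) ≤
      a * Real.exp (s * x i - K s) + b * Real.exp (t * x i - K t) := by
    intro i
    have h := convexOn_exp.2 (Set.mem_univ (s * x i - K s)) (Set.mem_univ (t * x i - K t)) ha hb hab
    simp only [smul_eq_mul] at h
    exact (congrArg Real.exp (by ring)).trans_le h
  have hle : ∑ i, w i * Real.exp ((a * s + b * t) * x i) ≤ Real.exp (a * K s + b * K t) := by
    have hK : ∀ u, ∑ i, w i * Real.exp (u * x i - K u) = 1 := fun u => by
      simp only [exp_sub, ← mul_div_assoc, ← sum_div, K, exp_logMeanExp x hw hw1]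
      exact div_self (sum_mul_exp_pos x hw hw1 u).ne'
    calc ∑ i, w i * Real.exp ((a * s + b * t) * x i)
        = (∑ i, w i * Real.exp ((a * s + b * t) * x i - (a * K s + b * K t))) *
            Real.exp (a * K s + b * K t) := by
          rw [sum_mul]
          refine sum_congr rfl fun i _ => ?_
          rw [mul_assoc, ← exp_add, sub_add_cancel]
      _ ≤ (∑ i, w i * (a * Real.exp (s * x i - K s) + b * Real.exp (t * x i - K t))) *
            Real.exp (a * K s + b * K t) := by
          gcongr with i
          exacts [hw i, hexp i]
      _ = Real.exp (a * K s + b * K t) := by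
          simp only [mul_add, sum_add_distrib, mul_left_comm _ a, mul_left_comm _ b, ← mul_sum, hK,
            mul_one, hab, one_mul]
  exact (Real.log_le_iff_le_exp (sum_mul_exp_pos x hw hw1 _)).2 hle

end LogMeanExp

theorem glmTiltedLoss_eq_dslope {d N : ℕ} (hN : 0 < N) (T : Fin N → EuclideanSpace ℝ (Fin d))
    (A : EuclideanSpace ℝ (Fin d) → ℝ) (t : ℝ) (θ : EuclideanSpace ℝ (Fin d)) :
    glmTiltedLoss T A t θ =
      dslope (logMeanExp (fun _ => 1 / (N : ℝ)) (fun i => A θ - inner ℝ θ (T i))) 0 t := by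
  have hw1 : ∑ _i : Fin N, 1 / (N : ℝ) = 1 := by simp [hN.ne']
  unfold glmTiltedLoss
  split_ifs with ht
  · rw [ht, dslope_same, (hasDerivAt_logMeanExp_zero _ hw1).deriv, mul_sum]
  · rw [dslope_of_ne _ ht, slope_def_field, logMeanExp_zero _ hw1, logMeanExp, mul_sum]
    simp only [sub_zero, one_div_mul_eq_div]

theorem monotone_glmTiltedLoss {d N : ℕ} (hN : 0 < N) (T : Fin N → EuclideanSpace ℝ (Fin d))
    (A : EuclideanSpace ℝ (Fin d) → ℝ) (θ : EuclideanSpace ℝ (Fin d)) :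
    Monotone fun t => glmTiltedLoss T A t θ := by
  have hw : ∀ _i : Fin N, 0 ≤ 1 / (N : ℝ) := fun _ => by positivity
  have hw1 : ∑ _i : Fin N, 1 / (N : ℝ) = 1 := by simp [hN.ne']
  intro t t' htt'
  simp only [glmTiltedLoss_eq_dslope hN]
  exact (convexOn_logMeanExp _ hw hw1).monotoneOn_dslope (Set.mem_univ 0)
    (hasDerivAt_logMeanExp_zero _ hw1).differentiableAt (Set.mem_univ t) (Set.mem_univ t') htt'

theorem glm_optimal_tilted_objective_monotone_general {d N : ℕ} (hN : 0 < N)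
    (T : Fin N → EuclideanSpace ℝ (Fin d))
    (A : EuclideanSpace ℝ (Fin d) → ℝ)
    (t t' : ℝ) (htt' : t ≤ t')
    (θstar θstar' : EuclideanSpace ℝ (Fin d))
    (hmin : ∀ θ : EuclideanSpace ℝ (Fin d), glmTiltedLoss T A t θstar ≤ glmTiltedLoss T A t θ) :
    glmTiltedLoss T A t θstar ≤ glmTiltedLoss T A t' θstar' :=
  (hmin θstar').trans (monotone_glmTiltedLoss hN T A θstar' htt')

/-- **The optimal tilted objective is nondecreasing in the tilt.** In the GLM setting, if
`t ≤ t'`, `θ*` minimizes `θ ↦ R̃(t;θ)` over `ℝ^d`, and `θ*'` minimizes `θ ↦ R̃(t';θ)` over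
`ℝ^d`, then `R̃(t;θ*) ≤ R̃(t';θ*')`. -/
theorem glm_optimal_tilted_objective_monotone {d N : ℕ} (hN : 0 < N)
    (T : Fin N → EuclideanSpace ℝ (Fin d))
    (A : EuclideanSpace ℝ (Fin d) → ℝ) (hA : ContDiff ℝ 2 A)
    (t t' : ℝ) (htt' : t ≤ t')
    (θstar θstar' : EuclideanSpace ℝ (Fin d))
    (hmin : ∀ θ : EuclideanSpace ℝ (Fin d), glmTiltedLoss T A t θstar ≤ glmTiltedLoss T A t θ)
    (hmin' : ∀ θ : EuclideanSpace ℝ (Fin d),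
      glmTiltedLoss T A t' θstar' ≤ glmTiltedLoss T A t' θ) :
    glmTiltedLoss T A t θstar ≤ glmTiltedLoss T A t' θstar' :=
  glm_optimal_tilted_objective_monotone_general hN T A t t' htt' θstar θstar' hmin
end

section
/- Fix θ ∈ ℝ^d and let c ∈ ℝ satisfy c ≤ f_i(θ) for all i ∈ [N] (in the paper, c is the global minimum F̃(−∞) = min_θ min_i f_i(θ)). Then for every t ≠ 0 and every a > c, the fraction of losses exceeding a is bounded by a function of the tilted objective: Q(a;θ) ≤ (exp(t·R̃(t;θ)) − exp(t·c)) / (exp(t·a) − exp(t·c)), where Q(a;θ) := (1/N)·#{i ∈ [N] : f_i(θ) ≥ a}. -/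
open Real Finset

/-- The `t`-tilted empirical loss for `t ≠ 0`:
`R̃(t;θ) = (1/t)·log((1/N)·Σᵢ exp(t·fᵢ(θ)))`. -/
noncomputable def tiltedLoss {d N : ℕ} (f : Fin N → EuclideanSpace ℝ (Fin d) → ℝ) (t : ℝ)
    (θ : EuclideanSpace ℝ (Fin d)) : ℝ :=
  (1 / t) * Real.log ((1 / (N : ℝ)) * ∑ i, Real.exp (t * f i θ))

/-!
Markov's inequality for the empirical distribution of the losses, applied to `x ↦ exp (t * x)`,
which is monotone for `t > 0` and antitone for `t < 0`; `exp (t * R̃(t;θ))` is exactly the mean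
of the `exp (t * fᵢ(θ))`.
-/

theorem card_filter_mul_le_sum_sub {ι : Type*} (s : Finset ι) {φ : ℝ → ℝ} (hφ : Monotone φ)
    {x : ι → ℝ} {c : ℝ} (hc : ∀ i ∈ s, c ≤ x i) (a : ℝ) :
    #{i ∈ s | a ≤ x i} * (φ a - φ c) ≤ ∑ i ∈ s, (φ (x i) - φ c) :=
  calc #{i ∈ s | a ≤ x i} * (φ a - φ c)
      ≤ ∑ i ∈ s with a ≤ x i, (φ (x i) - φ c) := by
        rw [← nsmul_eq_mul]
        exact card_nsmul_le_sum _ _ _ fun i hi => sub_le_sub_right (hφ (mem_filter.1 hi).2) _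
    _ ≤ ∑ i ∈ s, (φ (x i) - φ c) :=
        sum_le_sum_of_subset_of_nonneg (filter_subset _ _) fun i hi _ => sub_nonneg.2 (hφ (hc i hi))

section Markov

variable {ι : Type*} [Fintype ι] [Nonempty ι] {φ : ℝ → ℝ} {x : ι → ℝ} {c a : ℝ}

theorem Monotone.card_filter_div_card_le (hφ : Monotone φ) (hc : ∀ i, c ≤ x i)
    (hca : φ c < φ a) :
    (#{i | a ≤ x i} : ℝ) / Fintype.card ι ≤
      ((∑ i, φ (x i)) / Fintype.card ι - φ c) / (φ a - φ c) := by
  have hn : (0 : ℝ) < Fintype.card ι := by exact_mod_cast Fintype.card_pos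
  have hmean : (∑ i, φ (x i)) / Fintype.card ι - φ c =
      (∑ i, (φ (x i) - φ c)) / Fintype.card ι := by
    rw [sum_sub_distrib, sum_const, card_univ, nsmul_eq_mul]
    field_simp
  rw [hmean, le_div_iff₀ (sub_pos.2 hca), div_mul_eq_mul_div, div_le_div_iff_of_pos_right hn]
  exact card_filter_mul_le_sum_sub univ hφ (fun i _ => hc i) a

theorem Antitone.card_filter_div_card_le (hφ : Antitone φ) (hc : ∀ i, c ≤ x i)
    (hac : φ a < φ c) :
    (#{i | a ≤ x i} : ℝ) / Fintype.card ι ≤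
      ((∑ i, φ (x i)) / Fintype.card ι - φ c) / (φ a - φ c) := by
  -- the ratio on the right is unchanged when `φ` is replaced by `-φ`
  have h := hφ.neg.card_filter_div_card_le hc (neg_lt_neg hac)
  simp only [sum_neg_distrib, neg_div, neg_sub_neg] at h
  rwa [← neg_sub, ← neg_sub (φ a), neg_div_neg_eq] at h

end Markov

theorem exp_mul_tiltedLoss {d N : ℕ} (hN : 0 < N) (f : Fin N → EuclideanSpace ℝ (Fin d) → ℝ)
    {t : ℝ} (ht : t ≠ 0) (θ : EuclideanSpace ℝ (Fin d)) :
    exp (t * tiltedLoss f t θ) = (∑ i, exp (t * f i θ)) / N := by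
  have hpos : 0 < (1 / (N : ℝ)) * ∑ i, exp (t * f i θ) :=
    mul_pos (by positivity) (sum_pos (fun i _ => exp_pos _) ⟨⟨0, hN⟩, mem_univ _⟩)
  rw [tiltedLoss, ← mul_assoc, mul_one_div_cancel ht, one_mul, exp_log hpos, one_div_mul_eq_div]

/-- **Quantile bound via the tilted objective.** Fix `θ` and let `c` be a lower bound on all
losses at `θ` (in the paper, `c = F̃(−∞)` is the global minimum loss). Then for every `t ≠ 0`
and every `a > c`, the fraction `Q(a;θ)` of losses at least `a` satisfies
`Q(a;θ) ≤ (exp(t·R̃(t;θ)) − exp(t·c)) / (exp(t·a) − exp(t·c))`. -/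
theorem tilted_quantile_bound {d N : ℕ} (hN : 0 < N)
    (f : Fin N → EuclideanSpace ℝ (Fin d) → ℝ) (θ : EuclideanSpace ℝ (Fin d))
    (c : ℝ) (hc : ∀ i, c ≤ f i θ)
    (t : ℝ) (ht : t ≠ 0) (a : ℝ) (ha : c < a) :
    ((Finset.univ.filter fun i => a ≤ f i θ).card : ℝ) / (N : ℝ) ≤
      (Real.exp (t * tiltedLoss f t θ) - Real.exp (t * c)) /
        (Real.exp (t * a) - Real.exp (t * c)) := by
  have : Nonempty (Fin N) := Fin.pos_iff_nonempty.1 hN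
  rw [exp_mul_tiltedLoss hN f ht θ]
  rcases ht.lt_or_gt with hneg | hpos
  · have hφ : StrictAnti fun x => exp (t * x) := exp_strictMono.comp_strictAnti
      (strictAnti_mul_left hneg)
    simpa only [Fintype.card_fin] using hφ.antitone.card_filter_div_card_le hc (hφ ha)
  · have hφ : StrictMono fun x => exp (t * x) := exp_strictMono.comp (strictMono_mul_left_of_pos hpos)
    simpa only [Fintype.card_fin] using hφ.monotone.card_filter_div_card_le hc (hφ ha)
end
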